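/- Let α be a composition with r ≥ 1 parts which is not all-ones, and let k ≥ r. Then a word w over the alphabet {L, R, U_1, …, U_k} is admissible for α (with respect to the poset 𝔑) and satisfies that w.α has width k if and only if w can be written as the concatenation w = u^{(k)} s_k u^{(k−1)} s_{k−1} ⋯ s_{r+1} u^{(r)}, where each u^{(j)} is a (possibly empty) word over {U_1, …, U_j} and each s_j ∈ {L, R} (here the rightmost letter of w acts first on α). -/

import Mathlib

/-- A composition: a finite list of positive integers. -/
def IsComposition (P : List ℕ) : Prop := ∀ x ∈ P, 0 < x

/-- The alphabet `{L, R, U_1, U_2, …}` acting on compositions. -/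
inductive Letter where
  | L : Letter
  | R : Letter
  | U : ℕ → Letter
deriving DecidableEq

/-- The partial action of a letter: `L` prepends a part 1, `R` appends a part 1,
and `U j` increases the `j`-th part by 1 (defined when `1 ≤ j ≤` width). -/
def act : Letter → List ℕ → Option (List ℕ)
  | .L, P => some (1 :: P)
  | .R, P => some (P ++ [1])
  | .U j, P =>
    if 1 ≤ j ∧ j ≤ P.length then some (P.set (j - 1) (P.getD (j - 1) 0 + 1)) else none

/-- The partial action of a word `w = w_m ⋯ w_1` (a list whose head is `w_m`):
the rightmost letter `w_1` acts first. -/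
def actWord : List Letter → List ℕ → Option (List ℕ)
  | [], P => some P
  | t :: w, P => (actWord w P).bind (act t)

/-- A word is admissible for a composition (with respect to the poset 𝔑) if at
every step the action is defined, and the letter `R` is never applied to an
all-ones composition (since there `L` and `R` have the same effect and `L` has
higher priority). -/
def Admissible : List Letter → List ℕ → Prop
  | [], _ => True
  | t :: w, P =>
    Admissible w P ∧
      ∃ Q, actWord w P = some Q ∧ (act t Q).isSome ∧
        (t = Letter.R → ¬ ∀ a ∈ Q, a = 1)

/-- `buildWord u s r n` is the word `u^{(r+n)} s_{r+n} u^{(r+n−1)} s_{r+n−1} ⋯ s_{r+1} u^{(r)}`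
(as a list, the head acting last). -/
def buildWord (u : ℕ → List Letter) (s : ℕ → Letter) (r : ℕ) : ℕ → List Letter
  | 0 => u r
  | n + 1 => u (r + n + 1) ++ s (r + n + 1) :: buildWord u s r n

/-!
The width grows by one exactly at the letters `L` and `R`, and `U_j` acts only when `j` is at most
the current width; cutting `w` at its `L`/`R` letters therefore gives the blocks `u^{(j)}` over
`{U_1, …, U_j}`. Conversely such a word always acts, and admissibility can fail only by applying `R`
to an all-ones composition; this never happens, because a part larger than 1 survives every letter.
-/

open Function

def IsUpWord (j : ℕ) (v : List Letter) : Prop :=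
  ∀ t ∈ v, ∃ m, 1 ≤ m ∧ m ≤ j ∧ t = Letter.U m

def HasShape (r k : ℕ) (w : List Letter) : Prop :=
  ∃ u : ℕ → List Letter, ∃ s : ℕ → Letter,
    (∀ j, r ≤ j → j ≤ k → IsUpWord j (u j)) ∧
    (∀ j, r < j → j ≤ k → s j = Letter.L ∨ s j = Letter.R) ∧
    w = buildWord u s r (k - r)

def AdmissibleTo (w : List Letter) (P Q : List ℕ) : Prop :=
  Admissible w P ∧ actWord w P = some Q

section Letters

variable {t : Letter} {m : ℕ} {P Q : List ℕ}

lemma act_U_eq_some (h : act (.U m) P = some Q) :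
    1 ≤ m ∧ m ≤ P.length ∧ Q.length = P.length := by
  simp only [act] at h
  split_ifs at h with hm
  cases h
  exact ⟨hm.1, hm.2, List.length_set ..⟩

lemma exists_act_of_L_or_R (ht : t = .L ∨ t = .R) (P : List ℕ) :
    ∃ Q, act t P = some Q ∧ Q.length = P.length + 1 := by
  rcases ht with rfl | rfl <;> simp [act]

lemma exists_act_U (hm : 1 ≤ m) (hmP : m ≤ P.length) :
    ∃ Q, act (.U m) P = some Q ∧ Q.length = P.length := by
  simp [act, hm, hmP]

lemma exists_one_lt_set_succ {i : ℕ} (hi : i < P.length) (hP : ∃ a ∈ P, 1 < a) :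
    ∃ a ∈ P.set i (P.getD i 0 + 1), 1 < a := by
  obtain ⟨a, ha, h1⟩ := hP
  obtain ⟨p, hp, rfl⟩ := List.mem_iff_getElem.1 ha
  by_cases hip : i = p
  · subst hip
    exact ⟨_, List.mem_set hi _, by simp [hi]; omega⟩
  · exact ⟨P[p], List.mem_iff_getElem.2 ⟨p, by simpa using hp, List.getElem_set_ne hip _⟩, h1⟩

lemma exists_one_lt_of_act (h : act t P = some Q) (hP : ∃ a ∈ P, 1 < a) : ∃ a ∈ Q, 1 < a := by
  obtain ⟨a, ha, h1⟩ := hP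
  cases t with
  | L => cases h; exact ⟨a, List.mem_cons_of_mem _ ha, h1⟩
  | R => cases h; exact ⟨a, List.mem_append_left _ ha, h1⟩
  | U j =>
    simp only [act] at h
    split_ifs at h with hj
    cases h
    exact exists_one_lt_set_succ (by omega) ⟨a, ha, h1⟩

lemma exists_one_lt_of_not_all_one (hP : IsComposition P) (h : ¬ ∀ a ∈ P, a = 1) :
    ∃ a ∈ P, 1 < a := by
  push Not at h
  obtain ⟨a, ha, h1⟩ := h
  exact ⟨a, ha, by have := hP a ha; omega⟩

end Letters

section Words

variable {t : Letter} {w : List Letter} {P Q R : List ℕ}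

lemma actWord_cons_eq_some :
    actWord (t :: w) P = some R ↔ ∃ Q, actWord w P = some Q ∧ act t Q = some R :=
  Option.bind_eq_some_iff

lemma admissibleTo_cons :
    AdmissibleTo (t :: w) P R ↔
      ∃ Q, AdmissibleTo w P Q ∧ act t Q = some R ∧ (t = .R → ¬ ∀ a ∈ Q, a = 1) := by
  constructor
  · rintro ⟨⟨hadm, Q, hQ, -, hR⟩, hact⟩
    obtain ⟨Q', hQ', hact⟩ := actWord_cons_eq_some.1 hact
    obtain rfl : Q' = Q := Option.some_inj.1 (hQ'.symm.trans hQ)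
    exact ⟨Q', ⟨hadm, hQ'⟩, hact, hR⟩
  · rintro ⟨Q, ⟨hadm, hQ⟩, hact, hR⟩
    exact ⟨⟨hadm, Q, hQ, by simp [hact], hR⟩, actWord_cons_eq_some.2 ⟨Q, hQ, hact⟩⟩

lemma AdmissibleTo.append {v : List Letter} (hv : AdmissibleTo v Q R) (hw : AdmissibleTo w P Q) :
    AdmissibleTo (v ++ w) P R := by
  induction v generalizing R with
  | nil =>
    obtain rfl : Q = R := Option.some_inj.1 hv.2
    exact hw
  | cons t v ih =>
    obtain ⟨Q', hv, hact, hR⟩ := admissibleTo_cons.1 hv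
    exact admissibleTo_cons.2 ⟨Q', ih hv, hact, hR⟩

end Words

section BuildWord

variable {u u' : ℕ → List Letter} {s s' : ℕ → Letter} {r n : ℕ}

lemma buildWord_congr (hu : ∀ j ≤ r + n, u j = u' j) (hs : ∀ j ≤ r + n, s j = s' j) :
    buildWord u s r n = buildWord u' s' r n := by
  induction n with
  | zero => exact hu r le_rfl
  | succ n ih =>
    simp only [buildWord, hu (r + n + 1) le_rfl, hs (r + n + 1) le_rfl,
      ih (fun j hj => hu j (by omega)) (fun j hj => hs j (by omega))]

lemma buildWord_update_cons (t : Letter) :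
    buildWord (update u (r + n) (t :: u (r + n))) s r n = t :: buildWord u s r n := by
  cases n with
  | zero => exact update_self ..
  | succ n =>
    have : buildWord (update u (r + (n + 1)) (t :: u (r + (n + 1)))) s r n = buildWord u s r n :=
      buildWord_congr (fun j hj => update_of_ne (by omega) _ u) (fun _ _ => rfl)
    simp only [buildWord, ← add_assoc] at this ⊢
    rw [update_self, this, List.cons_append]

lemma buildWord_succ_update (t : Letter) :
    buildWord (update u (r + n + 1) []) (update s (r + n + 1) t) r (n + 1) =
      t :: buildWord u s r n := by
  have : buildWord (update u (r + n + 1) []) (update s (r + n + 1) t) r n = buildWord u s r n :=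
    buildWord_congr (fun j hj => update_of_ne (by omega) _ u)
      (fun j hj => update_of_ne (by omega) _ s)
  rw [buildWord, update_self, update_self, this, List.nil_append]

end BuildWord

section Shape

variable {t : Letter} {w : List Letter} {r k m : ℕ}

lemma hasShape_nil (r : ℕ) : HasShape r r [] :=
  ⟨fun _ => [], fun _ => .L, fun _ _ _ => by simp [IsUpWord], fun _ _ _ => .inl rfl,
    by simp [buildWord]⟩

lemma HasShape.cons_U (h : HasShape r k w) (hrk : r ≤ k) (hm : 1 ≤ m) (hmk : m ≤ k) :
    HasShape r k (.U m :: w) := by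
  obtain ⟨u, s, hu, hs, rfl⟩ := h
  refine ⟨update u k (.U m :: u k), s, fun j hrj hjk => ?_, hs, ?_⟩
  · rcases eq_or_ne j k with rfl | hne
    · rw [update_self]
      exact List.forall_mem_cons.2 ⟨⟨m, hm, hmk, rfl⟩, hu j hrj hjk⟩
    · rw [update_of_ne hne]
      exact hu j hrj hjk
  · obtain ⟨n, rfl⟩ := Nat.exists_eq_add_of_le hrk
    simpa using (buildWord_update_cons _).symm

lemma HasShape.cons_L_or_R (h : HasShape r k w) (hrk : r ≤ k) (ht : t = .L ∨ t = .R) :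
    HasShape r (k + 1) (t :: w) := by
  obtain ⟨u, s, hu, hs, rfl⟩ := h
  refine ⟨update u (k + 1) [], update s (k + 1) t, fun j hrj hjk => ?_, fun j hrj hjk => ?_, ?_⟩
  · rcases eq_or_ne j (k + 1) with rfl | hne
    · simp [IsUpWord]
    · rw [update_of_ne hne]
      exact hu j hrj (by omega)
  · rcases eq_or_ne j (k + 1) with rfl | hne
    · rwa [update_self]
    · rw [update_of_ne hne]
      exact hs j hrj (by omega)
  · obtain ⟨n, rfl⟩ := Nat.exists_eq_add_of_le hrk
    rw [show r + n + 1 - r = n + 1 by omega, Nat.add_sub_cancel_left]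
    exact (buildWord_succ_update _).symm

lemma hasShape_of_actWord_eq_some {P Q : List ℕ} (h : actWord w P = some Q) :
    P.length ≤ Q.length ∧ HasShape P.length Q.length w := by
  induction w generalizing Q with
  | nil =>
    obtain rfl : P = Q := Option.some_inj.1 h
    exact ⟨le_rfl, hasShape_nil _⟩
  | cons t w ih =>
    obtain ⟨Q', hQ', hact⟩ := actWord_cons_eq_some.1 h
    obtain ⟨hle, hshape⟩ := ih hQ'
    obtain ⟨m, rfl⟩ | hLR : (∃ m, t = .U m) ∨ (t = .L ∨ t = .R) := by cases t <;> simp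
    · obtain ⟨hm, hmQ', hlen⟩ := act_U_eq_some hact
      rw [hlen]
      exact ⟨hle, hshape.cons_U hle hm hmQ'⟩
    · obtain ⟨R, hR, hlen⟩ := exists_act_of_L_or_R hLR Q'
      obtain rfl : R = Q := Option.some_inj.1 (hR.symm.trans hact)
      rw [hlen]
      exact ⟨by omega, hshape.cons_L_or_R hle hLR⟩

end Shape

section Admissibility

variable {P : List ℕ}

lemma exists_admissibleTo_of_isUpWord {v : List Letter} (hv : IsUpWord P.length v)
    (hP : ∃ a ∈ P, 1 < a) :
    ∃ Q, AdmissibleTo v P Q ∧ Q.length = P.length ∧ ∃ a ∈ Q, 1 < a := by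
  induction v with
  | nil => exact ⟨P, ⟨trivial, rfl⟩, rfl, hP⟩
  | cons t v ih =>
    obtain ⟨⟨m, hm, hmP, rfl⟩, hv'⟩ := List.forall_mem_cons.1 hv
    obtain ⟨Q, hQ, hlen, hQbig⟩ := ih hv'
    obtain ⟨R, hR, hRlen⟩ := exists_act_U hm (hlen ▸ hmP)
    exact ⟨R, admissibleTo_cons.2 ⟨Q, hQ, hR, nofun⟩, hRlen.trans hlen,
      exists_one_lt_of_act hR hQbig⟩

lemma exists_admissibleTo_buildWord {u : ℕ → List Letter} {s : ℕ → Letter} {n : ℕ}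
    (hu : ∀ j, P.length ≤ j → j ≤ P.length + n → IsUpWord j (u j))
    (hs : ∀ j, P.length < j → j ≤ P.length + n → s j = .L ∨ s j = .R)
    (hP : ∃ a ∈ P, 1 < a) :
    ∃ Q, AdmissibleTo (buildWord u s P.length n) P Q ∧ Q.length = P.length + n ∧
      ∃ a ∈ Q, 1 < a := by
  induction n with
  | zero => exact exists_admissibleTo_of_isUpWord (hu _ le_rfl (by omega)) hP
  | succ n ih =>
    obtain ⟨Q, hQ, hlen, ⟨a, ha, h1⟩⟩ :=
      ih (fun j h1 h2 => hu j h1 (by omega)) (fun j h1 h2 => hs j h1 (by omega))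
    obtain ⟨R, hR, hRlen⟩ := exists_act_of_L_or_R (hs (P.length + n + 1) (by omega) le_rfl) Q
    have hQR : AdmissibleTo (s (P.length + n + 1) :: buildWord u s P.length n) P R :=
      admissibleTo_cons.2 ⟨Q, hQ, hR, fun _ hall => by simp [hall a ha] at h1⟩
    have hup : IsUpWord R.length (u (P.length + n + 1)) := by
      rw [hRlen, hlen]
      exact hu _ (by omega) le_rfl
    obtain ⟨S, hS, hSlen, hSbig⟩ :=
      exists_admissibleTo_of_isUpWord hup (exists_one_lt_of_act hR ⟨a, ha, h1⟩)
    exact ⟨S, hS.append hQR, by omega, hSbig⟩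

lemma HasShape.exists_admissibleTo {w : List Letter} {k : ℕ} (h : HasShape P.length k w)
    (hk : P.length ≤ k) (hP : ∃ a ∈ P, 1 < a) :
    ∃ Q, AdmissibleTo w P Q ∧ Q.length = k := by
  obtain ⟨u, s, hu, hs, rfl⟩ := h
  obtain ⟨Q, hQ, hlen, -⟩ := exists_admissibleTo_buildWord (n := k - P.length)
    (fun j h1 h2 => hu j h1 (by omega)) (fun j h1 h2 => hs j h1 (by omega)) hP
  exact ⟨Q, hQ, by omega⟩

end Admissibility

theorem stmt15_general (α : List ℕ) (hα : IsComposition α) (r : ℕ) (hr : α.length = r)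
    (hno : ¬ ∀ a ∈ α, a = 1) (k : ℕ) (hk : r ≤ k) :
    ∀ w : List Letter,
      (∀ t ∈ w, t = Letter.L ∨ t = Letter.R ∨ ∃ j, 1 ≤ j ∧ j ≤ k ∧ t = Letter.U j) →
      ((Admissible w α ∧ ∃ Q, actWord w α = some Q ∧ Q.length = k) ↔
        ∃ u : ℕ → List Letter, ∃ s : ℕ → Letter,
          (∀ j, r ≤ j → j ≤ k → ∀ t ∈ u j, ∃ m, 1 ≤ m ∧ m ≤ j ∧ t = Letter.U m) ∧
          (∀ j, r < j → j ≤ k → s j = Letter.L ∨ s j = Letter.R) ∧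
          w = buildWord u s r (k - r)) := by
  intro w _
  subst hr
  change _ ↔ HasShape α.length k w
  constructor
  · rintro ⟨-, Q, hQ, rfl⟩
    exact (hasShape_of_actWord_eq_some hQ).2
  · intro h
    obtain ⟨Q, ⟨hadm, hQ⟩, hlen⟩ :=
      h.exists_admissibleTo hk (exists_one_lt_of_not_all_one hα hno)
    exact ⟨hadm, Q, hQ, hlen⟩

theorem stmt15 (α : List ℕ) (hα : IsComposition α) (r : ℕ) (hr : α.length = r)
    (hr1 : 1 ≤ r) (hno : ¬ ∀ a ∈ α, a = 1) (k : ℕ) (hk : r ≤ k) :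
    ∀ w : List Letter,
      (∀ t ∈ w, t = Letter.L ∨ t = Letter.R ∨ ∃ j, 1 ≤ j ∧ j ≤ k ∧ t = Letter.U j) →
      ((Admissible w α ∧ ∃ Q, actWord w α = some Q ∧ Q.length = k) ↔
        ∃ u : ℕ → List Letter, ∃ s : ℕ → Letter,
          (∀ j, r ≤ j → j ≤ k → ∀ t ∈ u j, ∃ m, 1 ≤ m ∧ m ≤ j ∧ t = Letter.U m) ∧
          (∀ j, r < j → j ≤ k → s j = Letter.L ∨ s j = Letter.R) ∧
          w = buildWord u s r (k - r)) :=
  stmt15_general α hα r hr hno k hk
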